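/- Let m < −5/2, let a₁, a₂, a₃ ∈ S^m(ℝ) and a(η) = a₁(η₁)a₂(η₂)a₃(η₃), and let b : ℝ³ → ℂ be measurable with ‖b‖ < ∞. Fix 0 < α < β and 0 < δ < min(1, α). Then there exists C > 0 such that for all ξ ∈ ℝ with |ξ| > 1 and all κ₂, κ₃ ∈ [α, β]: | ∫_{A_{GGG}(ξ,κ₂,κ₃)} ( a(ξθ−η) − a(ξθ) ) b(η) dη | ≤ C |ξ|^{3m−1}. -/

import Mathlib

/-!
On `A_GGG δ ξ κ₂ κ₃` every factor of `a(ξθ - η)`, and every factor of `a(ξθ)`, is evaluated at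
distance `≳ |ξ|` from the origin. If some `|ηᵢ| ≳ |ξ|`, both terms are `O(|ξ|^{3m})` and the
missing power of `|ξ|` is paid for by `|ηᵢ|`. Otherwise each segment from `ξθᵢ` to `ξθᵢ - ηᵢ`
stays at distance `≳ |ξ|` from the origin, and the mean value theorem applied factor by factor
gives `O(|ξ|^{3m-1} |η|)`. So the integrand is `O(|ξ|^{3m-1} |η| |b(η)|)`, and `|η| |b(η)|` is
integrable by Cauchy–Schwarz against the weight in `‖b‖`, since `⟨t⟩^{2m+3}` is integrable.
-/

open MeasureTheory

/-- The Japanese bracket `⟨t⟩ = (1+t²)^{1/2}`. -/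
noncomputable def jb (t : ℝ) : ℝ := Real.sqrt (1 + t ^ 2)

/-- The symbol class `S^m(ℝ)`. -/
def SymbolClass (m : ℝ) (a : ℝ → ℂ) : Prop :=
  ContDiff ℝ (⊤ : ℕ∞) a ∧
    ∀ k : ℕ, ∃ C : ℝ, 0 < C ∧ ∀ t : ℝ, ‖iteratedDeriv k a t‖ ≤ C * jb t ^ (m - (k : ℝ))

/-- `a(η) = a₁(η₁)a₂(η₂)a₃(η₃)`. -/
noncomputable def aprod (a₁ a₂ a₃ : ℝ → ℂ) (η : Fin 3 → ℝ) : ℂ :=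
  a₁ (η 0) * a₂ (η 1) * a₃ (η 2)

/-- `ξθ = (ξ, κ₂ξ, κ₃ξ)`. -/
def xitheta (ξ κ₂ κ₃ : ℝ) : Fin 3 → ℝ := ![ξ, κ₂ * ξ, κ₃ * ξ]

/-- `A_{GGG}(ξ,κ₂,κ₃) = {η : |η₁−ξ| ≥ δ|ξ|, |η₂−κ₂ξ| ≥ δ|ξ|, |η₃−κ₃ξ| ≥ δ|ξ|}`. -/
def A_GGG (δ ξ κ₂ κ₃ : ℝ) : Set (Fin 3 → ℝ) :=
  {η | δ * |ξ| ≤ |η 0 - ξ| ∧ δ * |ξ| ≤ |η 1 - κ₂ * ξ| ∧ δ * |ξ| ≤ |η 2 - κ₃ * ξ|}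

/-- `‖b‖² = ∫ ⟨η₁⟩^{−2m−1}⟨η₂⟩^{−2m−1}⟨η₃⟩^{−2m−1}|b(η)|² dη` as an `ℝ≥0∞`-valued integral. -/
noncomputable def bNormSq (m : ℝ) (b : (Fin 3 → ℝ) → ℂ) : ENNReal :=
  ∫⁻ η : Fin 3 → ℝ, ENNReal.ofReal
    (jb (η 0) ^ (-2 * m - 1) * jb (η 1) ^ (-2 * m - 1) * jb (η 2) ^ (-2 * m - 1) * ‖b η‖ ^ 2)

lemma jb_pos (t : ℝ) : 0 < jb t := Real.sqrt_pos.2 (by positivity)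

lemma one_le_jb (t : ℝ) : 1 ≤ jb t :=
  Real.one_le_sqrt.2 (by nlinarith [sq_nonneg t])

lemma abs_le_jb (t : ℝ) : |t| ≤ jb t :=
  (Real.sqrt_sq_eq_abs t).symm.le.trans (Real.sqrt_le_sqrt (by linarith))

lemma continuous_jb : Continuous jb := by
  unfold jb; fun_prop

lemma jb_rpow_le_of_le_abs {m r t : ℝ} (hm : m ≤ 0) (hr : 0 < r) (h : r ≤ |t|) :
    jb t ^ m ≤ r ^ m :=
  Real.rpow_le_rpow_of_nonpos hr (h.trans (abs_le_jb t)) hm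

lemma integrable_jb_rpow {s : ℝ} (hs : s < -1) : Integrable (fun t : ℝ => jb t ^ s) := by
  have h := integrable_rpow_neg_one_add_norm_sq (E := ℝ) (μ := volume) (r := -s)
    (by simp only [Module.finrank_self, Nat.cast_one]; linarith)
  refine h.congr (ae_of_all _ fun t => ?_)
  dsimp only
  rw [jb, Real.sqrt_eq_rpow, ← Real.rpow_mul (by positivity), Real.norm_eq_abs, sq_abs]
  ring_nf

lemma norm_le_prod_jb {ι : Type*} [Fintype ι] (η : ι → ℝ) : ‖η‖ ≤ ∏ i, jb (η i) := by
  classical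
  refine (pi_norm_le_iff_of_nonneg (Finset.prod_nonneg fun i _ => (jb_pos _).le)).2 fun i => ?_
  rw [Real.norm_eq_abs, ← Finset.mul_prod_erase _ _ (Finset.mem_univ i)]
  exact (abs_le_jb _).trans
    (le_mul_of_one_le_right (jb_pos _).le (Finset.one_le_prod fun j _ => one_le_jb _))

def SymbolEstimates (m C : ℝ) (a : ℝ → ℂ) : Prop :=
  (∀ r t, 0 < r → r ≤ |t| → ‖a t‖ ≤ C * r ^ m) ∧
    ∀ r x y, 0 < r → (∀ t ∈ segment ℝ x (x - y), r ≤ |t|) →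
      ‖a (x - y) - a x‖ ≤ C * r ^ (m - 1) * |y|

section Symbol

variable {m C : ℝ} {a : ℝ → ℂ}

lemma SymbolClass.exists_norm_iteratedDeriv_le (h : SymbolClass m a) (hm : m ≤ 0) (k : ℕ) :
    ∃ C, 0 < C ∧ ∀ r t, 0 < r → r ≤ |t| → ‖iteratedDeriv k a t‖ ≤ C * r ^ (m - k) := by
  obtain ⟨C, hC, hbound⟩ := h.2 k
  have hmk : m - k ≤ 0 := by linarith [k.cast_nonneg (α := ℝ)]
  exact ⟨C, hC, fun r t hr hrt =>
    (hbound t).trans (mul_le_mul_of_nonneg_left (jb_rpow_le_of_le_abs hmk hr hrt) hC.le)⟩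

lemma SymbolClass.exists_symbolEstimates (h : SymbolClass m a) (hm : m ≤ 0) :
    ∃ C, SymbolEstimates m C a := by
  obtain ⟨C₀, -, h₀⟩ := h.exists_norm_iteratedDeriv_le hm 0
  obtain ⟨C₁, -, h₁⟩ := h.exists_norm_iteratedDeriv_le hm 1
  refine ⟨max C₀ C₁, fun r t hr ht => ?_, fun r x y hr hseg => ?_⟩
  · have := h₀ r t hr ht
    rw [iteratedDeriv_zero, Nat.cast_zero, sub_zero] at this
    exact this.trans (mul_le_mul_of_nonneg_right (le_max_left _ _) (by positivity))
  · have hderiv : ∀ t ∈ segment ℝ x (x - y), ‖deriv a t‖ ≤ max C₀ C₁ * r ^ (m - 1) := by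
      intro t ht
      have := h₁ r t hr (hseg t ht)
      rw [iteratedDeriv_one, Nat.cast_one] at this
      exact this.trans (mul_le_mul_of_nonneg_right (le_max_right _ _) (by positivity))
    have hdiff : Differentiable ℝ a := h.1.differentiable (by simp)
    simpa using (convex_segment x (x - y)).norm_image_sub_le_of_norm_deriv_le
      (fun t _ => hdiff t) hderiv (left_mem_segment ℝ x _) (right_mem_segment ℝ x _)

lemma SymbolEstimates.nonneg (h : SymbolEstimates m C a) : 0 ≤ C := by
  have := h.1 1 1 one_pos (by simp)
  rw [Real.one_rpow, mul_one] at this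
  exact (norm_nonneg _).trans this

end Symbol

lemma norm_mul_mul_sub_mul_mul_le {R : Type*} [SeminormedRing R] (p₁ p₂ p₃ q₁ q₂ q₃ : R) :
    ‖p₁ * p₂ * p₃ - q₁ * q₂ * q₃‖ ≤
      ‖p₁ - q₁‖ * ‖p₂‖ * ‖p₃‖ + ‖q₁‖ * ‖p₂ - q₂‖ * ‖p₃‖ + ‖q₁‖ * ‖q₂‖ * ‖p₃ - q₃‖ := by
  have : p₁ * p₂ * p₃ - q₁ * q₂ * q₃ =
      (p₁ - q₁) * p₂ * p₃ + q₁ * (p₂ - q₂) * p₃ + q₁ * q₂ * (p₃ - q₃) := by noncomm_ring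
  rw [this]
  exact norm_add₃_le.trans (add_le_add (add_le_add norm_mul₃_le norm_mul₃_le) norm_mul₃_le)

lemma le_abs_of_mem_segment_sub {r x y t : ℝ} (hx : 2 * r ≤ |x|) (hy : |y| ≤ r)
    (ht : t ∈ segment ℝ x (x - y)) : r ≤ |t| := by
  rw [segment_eq_uIcc] at ht
  have htx : |t - x| ≤ |y| := by simpa using Set.abs_sub_left_of_mem_uIcc ht
  linarith [abs_sub_abs_le_abs_sub x t, abs_sub_comm t x]

lemma rpow_mul_rpow_mul_rpow {r : ℝ} (hr : 0 < r) (p q s : ℝ) :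
    r ^ p * r ^ q * r ^ s = r ^ (p + q + s) := by
  rw [Real.rpow_add hr, Real.rpow_add hr]

section Product

variable {m C₁ C₂ C₃ r : ℝ} {a₁ a₂ a₃ : ℝ → ℂ} {x y : Fin 3 → ℝ}

lemma norm_aprod_le (h₁ : SymbolEstimates m C₁ a₁) (h₂ : SymbolEstimates m C₂ a₂)
    (h₃ : SymbolEstimates m C₃ a₃) (hr : 0 < r) (hx : ∀ i, r ≤ |x i|) :
    ‖aprod a₁ a₂ a₃ x‖ ≤ C₁ * C₂ * C₃ * r ^ (3 * m) := by
  have := h₁.nonneg; have := h₂.nonneg; have := h₃.nonneg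
  calc ‖aprod a₁ a₂ a₃ x‖ = ‖a₁ (x 0)‖ * ‖a₂ (x 1)‖ * ‖a₃ (x 2)‖ := by
        simp only [aprod, norm_mul]
    _ ≤ (C₁ * r ^ m) * (C₂ * r ^ m) * (C₃ * r ^ m) := by
      gcongr
      exacts [h₁.1 r _ hr (hx 0), h₂.1 r _ hr (hx 1), h₃.1 r _ hr (hx 2)]
    _ = C₁ * C₂ * C₃ * r ^ (3 * m) := by
      rw [show 3 * m = m + m + m by ring, ← rpow_mul_rpow_mul_rpow hr]; ring

lemma norm_aprod_sub_le_of_le_abs (h₁ : SymbolEstimates m C₁ a₁) (h₂ : SymbolEstimates m C₂ a₂)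
    (h₃ : SymbolEstimates m C₃ a₃) (hr : 0 < r) (hx : ∀ i, r ≤ |x i|)
    (hxy : ∀ i, r ≤ |x i - y i|) :
    ‖aprod a₁ a₂ a₃ (x - y) - aprod a₁ a₂ a₃ x‖ ≤ 2 * (C₁ * C₂ * C₃) * r ^ (3 * m) := by
  have := norm_aprod_le h₁ h₂ h₃ hr hx
  have := norm_aprod_le h₁ h₂ h₃ hr (x := x - y) hxy
  linarith [norm_sub_le (aprod a₁ a₂ a₃ (x - y)) (aprod a₁ a₂ a₃ x)]

lemma norm_aprod_sub_le_of_segment (h₁ : SymbolEstimates m C₁ a₁) (h₂ : SymbolEstimates m C₂ a₂)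
    (h₃ : SymbolEstimates m C₃ a₃) (hr : 0 < r)
    (hseg : ∀ i, ∀ t ∈ segment ℝ (x i) (x i - y i), r ≤ |t|) :
    ‖aprod a₁ a₂ a₃ (x - y) - aprod a₁ a₂ a₃ x‖ ≤ C₁ * C₂ * C₃ * r ^ (3 * m - 1) * ∑ i, |y i| := by
  have := h₁.nonneg; have := h₂.nonneg; have := h₃.nonneg
  have hx i : r ≤ |x i| := hseg i _ (left_mem_segment ℝ _ _)
  have hxy i : r ≤ |x i - y i| := hseg i _ (right_mem_segment ℝ _ _)
  calc ‖aprod a₁ a₂ a₃ (x - y) - aprod a₁ a₂ a₃ x‖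
      ≤ ‖a₁ (x 0 - y 0) - a₁ (x 0)‖ * ‖a₂ (x 1 - y 1)‖ * ‖a₃ (x 2 - y 2)‖
        + ‖a₁ (x 0)‖ * ‖a₂ (x 1 - y 1) - a₂ (x 1)‖ * ‖a₃ (x 2 - y 2)‖
        + ‖a₁ (x 0)‖ * ‖a₂ (x 1)‖ * ‖a₃ (x 2 - y 2) - a₃ (x 2)‖ :=
      norm_mul_mul_sub_mul_mul_le _ _ _ _ _ _
    _ ≤ (C₁ * r ^ (m - 1) * |y 0|) * (C₂ * r ^ m) * (C₃ * r ^ m)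
        + (C₁ * r ^ m) * (C₂ * r ^ (m - 1) * |y 1|) * (C₃ * r ^ m)
        + (C₁ * r ^ m) * (C₂ * r ^ m) * (C₃ * r ^ (m - 1) * |y 2|) := by
      gcongr
      exacts [h₁.2 r _ _ hr (hseg 0), h₂.1 r _ hr (hxy 1), h₃.1 r _ hr (hxy 2),
        h₁.1 r _ hr (hx 0), h₂.2 r _ _ hr (hseg 1), h₃.1 r _ hr (hxy 2),
        h₁.1 r _ hr (hx 0), h₂.1 r _ hr (hx 1), h₃.2 r _ _ hr (hseg 2)]
    _ = C₁ * C₂ * C₃ * (r ^ (m - 1) * r ^ m * r ^ m) * (|y 0| + |y 1| + |y 2|) := by ring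
    _ = C₁ * C₂ * C₃ * r ^ (3 * m - 1) * ∑ i, |y i| := by
      rw [rpow_mul_rpow_mul_rpow hr, Fin.sum_univ_three]; ring_nf

lemma norm_aprod_sub_le (h₁ : SymbolEstimates m C₁ a₁) (h₂ : SymbolEstimates m C₂ a₂)
    (h₃ : SymbolEstimates m C₃ a₃) (hr : 0 < r) (hx : ∀ i, 2 * r ≤ |x i|)
    (hxy : ∀ i, r ≤ |x i - y i|) :
    ‖aprod a₁ a₂ a₃ (x - y) - aprod a₁ a₂ a₃ x‖ ≤ 3 * (C₁ * C₂ * C₃) * r ^ (3 * m - 1) * ‖y‖ := by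
  have := h₁.nonneg; have := h₂.nonneg; have := h₃.nonneg
  by_cases hfar : ∃ i, r ≤ |y i|
  · obtain ⟨i, hi⟩ := hfar
    have hry : r ≤ ‖y‖ := hi.trans (norm_le_pi_norm y i)
    calc ‖aprod a₁ a₂ a₃ (x - y) - aprod a₁ a₂ a₃ x‖
        ≤ 2 * (C₁ * C₂ * C₃) * r ^ (3 * m) :=
          norm_aprod_sub_le_of_le_abs h₁ h₂ h₃ hr (fun i => by linarith [hx i]) hxy
      _ = 2 * (C₁ * C₂ * C₃) * r ^ (3 * m - 1) * r := by
          rw [mul_assoc _ (r ^ _), ← Real.rpow_add_one hr.ne', sub_add_cancel]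
      _ ≤ 3 * (C₁ * C₂ * C₃) * r ^ (3 * m - 1) * ‖y‖ := by gcongr; norm_num
  · push Not at hfar
    calc ‖aprod a₁ a₂ a₃ (x - y) - aprod a₁ a₂ a₃ x‖
        ≤ C₁ * C₂ * C₃ * r ^ (3 * m - 1) * ∑ i, |y i| :=
          norm_aprod_sub_le_of_segment h₁ h₂ h₃ hr
            fun i _ ht => le_abs_of_mem_segment_sub (hx i) (hfar i).le ht
      _ ≤ C₁ * C₂ * C₃ * r ^ (3 * m - 1) * ∑ _i : Fin 3, ‖y‖ := by
          gcongr with i; exact norm_le_pi_norm y i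
      _ = 3 * (C₁ * C₂ * C₃) * r ^ (3 * m - 1) * ‖y‖ := by
          simp only [Finset.sum_const, Finset.card_univ, Fintype.card_fin, nsmul_eq_mul]; ring

end Product

lemma min_one_mul_abs_le_abs_xitheta {α ξ κ₂ κ₃ : ℝ} (hκ₂ : α ≤ κ₂) (hκ₃ : α ≤ κ₃) (i : Fin 3) :
    min 1 α * |ξ| ≤ |xitheta ξ κ₂ κ₃ i| := by
  have hκ {κ : ℝ} (hκ : α ≤ κ) : min 1 α * |ξ| ≤ |κ * ξ| := by
    rw [abs_mul]
    gcongr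
    exact (min_le_right _ _).trans (hκ.trans (le_abs_self κ))
  fin_cases i
  · exact mul_le_of_le_one_left (abs_nonneg ξ) (min_le_left _ _)
  · exact hκ hκ₂
  · exact hκ hκ₃

lemma le_abs_xitheta_sub_of_mem_A_GGG {δ ξ κ₂ κ₃ : ℝ} {η : Fin 3 → ℝ}
    (hη : η ∈ A_GGG δ ξ κ₂ κ₃) (i : Fin 3) : δ * |ξ| ≤ |xitheta ξ κ₂ κ₃ i - η i| := by
  obtain ⟨h₀, h₁, h₂⟩ := hη
  fin_cases i <;> (rw [abs_sub_comm]; simpa [xitheta])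

lemma measurableSet_A_GGG (δ ξ κ₂ κ₃ : ℝ) : MeasurableSet (A_GGG δ ξ κ₂ κ₃) := by
  refine IsClosed.measurableSet ?_
  simp only [A_GGG, Set.ofPred_and]
  exact (isClosed_le (by fun_prop) (by fun_prop)).inter
    ((isClosed_le (by fun_prop) (by fun_prop)).inter (isClosed_le (by fun_prop) (by fun_prop)))

lemma norm_aprod_xitheta_sub_le {m C₁ C₂ C₃ α δ ξ κ₂ κ₃ : ℝ} {a₁ a₂ a₃ : ℝ → ℂ}
    {η : Fin 3 → ℝ} (h₁ : SymbolEstimates m C₁ a₁) (h₂ : SymbolEstimates m C₂ a₂)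
    (h₃ : SymbolEstimates m C₃ a₃) (hα : 0 < α) (hδ : 0 < δ) (hξ : ξ ≠ 0)
    (hκ₂ : α ≤ κ₂) (hκ₃ : α ≤ κ₃) (hη : η ∈ A_GGG δ ξ κ₂ κ₃) :
    ‖aprod a₁ a₂ a₃ (xitheta ξ κ₂ κ₃ - η) - aprod a₁ a₂ a₃ (xitheta ξ κ₂ κ₃)‖ ≤
      3 * (C₁ * C₂ * C₃) * min (min 1 α / 2) δ ^ (3 * m - 1) * |ξ| ^ (3 * m - 1) * ‖η‖ := by
  set c := min (min 1 α / 2) δ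
  have hc : 0 < c := by positivity
  have hcα : 2 * c ≤ min 1 α := by linarith [min_le_left (min 1 α / 2) δ]
  have hx (i : Fin 3) : 2 * (c * |ξ|) ≤ |xitheta ξ κ₂ κ₃ i| := by
    nlinarith [min_one_mul_abs_le_abs_xitheta (ξ := ξ) hκ₂ hκ₃ i, abs_nonneg ξ]
  have hxη (i : Fin 3) : c * |ξ| ≤ |xitheta ξ κ₂ κ₃ i - η i| := by
    nlinarith [le_abs_xitheta_sub_of_mem_A_GGG hη i, min_le_right (min 1 α / 2) δ, abs_nonneg ξ]
  have := norm_aprod_sub_le h₁ h₂ h₃ (by positivity) hx hxη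
  rwa [Real.mul_rpow hc.le (abs_nonneg ξ), ← mul_assoc] at this

lemma continuous_prod_jb_rpow {n : ℕ} (s : ℝ) :
    Continuous fun η : Fin n → ℝ => ∏ i, jb (η i) ^ s :=
  continuous_finsetProd _ fun i _ =>
    (continuous_jb.comp (continuous_apply i)).rpow_const fun _ => Or.inl (jb_pos _).ne'

lemma integrable_prod_jb_rpow {n : ℕ} {s : ℝ} (hs : s < -1) :
    Integrable fun η : Fin n → ℝ => ∏ i, jb (η i) ^ s :=
  Integrable.fin_nat_prod fun _ => integrable_jb_rpow hs

lemma prod_jb_rpow_sq {n : ℕ} (s : ℝ) (η : Fin n → ℝ) :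
    (∏ i, jb (η i) ^ s) ^ 2 = ∏ i, jb (η i) ^ (2 * s) := by
  rw [← Finset.prod_pow]
  refine Finset.prod_congr rfl fun i _ => ?_
  rw [← Real.rpow_natCast, ← Real.rpow_mul (jb_pos _).le, mul_comm]; norm_num

lemma integrable_norm_mul_norm {m : ℝ} (hm : m < -5 / 2) {b : (Fin 3 → ℝ) → ℂ}
    (hb : Measurable b) (hbnorm : bNormSq m b < ⊤) :
    Integrable fun η => ‖η‖ * ‖b η‖ := by
  set p : (Fin 3 → ℝ) → ℝ := fun η => ∏ i, jb (η i) ^ (m + 3 / 2)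
  set q : (Fin 3 → ℝ) → ℝ := fun η => (∏ i, jb (η i) ^ (-m - 1 / 2)) * ‖b η‖
  have hp : Integrable fun η => p η ^ 2 := by
    simp only [p, prod_jb_rpow_sq]
    exact integrable_prod_jb_rpow (by linarith)
  have hq : Integrable fun η => q η ^ 2 := by
    refine ⟨((continuous_prod_jb_rpow _).measurable.mul hb.norm).pow_const 2
      |>.aestronglyMeasurable, ?_⟩
    unfold bNormSq at hbnorm
    rw [hasFiniteIntegral_iff_ofReal (ae_of_all _ fun η => sq_nonneg _)]
    convert hbnorm using 3 with η
    simp only [q]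
    rw [mul_pow, prod_jb_rpow_sq, Fin.prod_univ_three, show 2 * (-m - 1 / 2) = -2 * m - 1 by ring]
  refine ((hp.add hq).div_const 2).mono'
    (continuous_norm.measurable.mul hb.norm).aestronglyMeasurable (ae_of_all _ fun η => ?_)
  have hpq : ∏ i, jb (η i) = p η * (∏ i, jb (η i) ^ (-m - 1 / 2)) := by
    simp only [p, ← Finset.prod_mul_distrib, ← Real.rpow_add (jb_pos _),
      show m + 3 / 2 + (-m - 1 / 2) = 1 by ring, Real.rpow_one]
  rw [Real.norm_of_nonneg (by positivity)]
  calc ‖η‖ * ‖b η‖ ≤ p η * q η := by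
        simp only [q, ← mul_assoc, ← hpq]
        gcongr
        exact norm_le_prod_jb η
    _ ≤ (p η ^ 2 + q η ^ 2) / 2 := by linarith [two_mul_le_add_sq (p η) (q η)]

lemma norm_setIntegral_le_mul_integral {X E : Type*} [MeasurableSpace X] [NormedAddCommGroup E]
    [NormedSpace ℝ E] {μ : Measure X} {f : X → E} {g : X → ℝ} {s : Set X} {c : ℝ}
    (hs : MeasurableSet s) (hg : Integrable g μ) (hg₀ : 0 ≤ g) (hc : 0 ≤ c)
    (hfg : ∀ x ∈ s, ‖f x‖ ≤ c * g x) :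
    ‖∫ x in s, f x ∂μ‖ ≤ c * ∫ x, g x ∂μ :=
  calc ‖∫ x in s, f x ∂μ‖ ≤ ∫ x in s, c * g x ∂μ :=
        norm_integral_le_of_norm_le (hg.integrableOn.const_mul c) (ae_restrict_of_forall_mem hs hfg)
    _ = c * ∫ x in s, g x ∂μ := integral_const_mul c g
    _ ≤ c * ∫ x, g x ∂μ :=
        mul_le_mul_of_nonneg_left (setIntegral_le_integral hg (ae_of_all _ hg₀)) hc

theorem stmt8_general (m : ℝ) (hm : m < -5 / 2) (a₁ a₂ a₃ : ℝ → ℂ)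
    (h₁ : SymbolClass m a₁) (h₂ : SymbolClass m a₂) (h₃ : SymbolClass m a₃)
    (b : (Fin 3 → ℝ) → ℂ) (hb : Measurable b) (hbnorm : bNormSq m b < ⊤)
    (α β δ : ℝ) (hα : 0 < α) (hδ : 0 < δ) :
    ∃ C : ℝ, 0 < C ∧
      ∀ ξ : ℝ, 1 < |ξ| → ∀ κ₂ ∈ Set.Icc α β, ∀ κ₃ ∈ Set.Icc α β,
        ‖∫ η in A_GGG δ ξ κ₂ κ₃,
            (aprod a₁ a₂ a₃ (xitheta ξ κ₂ κ₃ - η) - aprod a₁ a₂ a₃ (xitheta ξ κ₂ κ₃)) * b η‖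
          ≤ C * |ξ| ^ (3 * m - 1) := by
  obtain ⟨C₁, e₁⟩ := h₁.exists_symbolEstimates (by linarith)
  obtain ⟨C₂, e₂⟩ := h₂.exists_symbolEstimates (by linarith)
  obtain ⟨C₃, e₃⟩ := h₃.exists_symbolEstimates (by linarith)
  set K := 3 * (C₁ * C₂ * C₃) * min (min 1 α / 2) δ ^ (3 * m - 1)
  have hK : 0 ≤ K := by
    have := e₁.nonneg; have := e₂.nonneg; have := e₃.nonneg
    positivity
  set I := ∫ η, ‖η‖ * ‖b η‖
  have hI : 0 ≤ I := integral_nonneg fun η => by positivity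
  refine ⟨K * I + 1, by positivity, fun ξ hξ κ₂ hκ₂ κ₃ hκ₃ => ?_⟩
  have hξ₀ : ξ ≠ 0 := by rintro rfl; norm_num at hξ
  calc _ ≤ K * |ξ| ^ (3 * m - 1) * I := by
        refine norm_setIntegral_le_mul_integral (measurableSet_A_GGG δ ξ κ₂ κ₃)
          (integrable_norm_mul_norm hm hb hbnorm) (fun η => by positivity) (by positivity)
          fun η hη => ?_
        rw [norm_mul]
        exact (mul_le_mul_of_nonneg_right (norm_aprod_xitheta_sub_le e₁ e₂ e₃ hα hδ hξ₀
          hκ₂.1 hκ₃.1 hη) (norm_nonneg _)).trans_eq (by ring)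
    _ ≤ (K * I + 1) * |ξ| ^ (3 * m - 1) := by
        nlinarith [Real.rpow_nonneg (abs_nonneg ξ) (3 * m - 1)]

theorem stmt8 (m : ℝ) (hm : m < -5 / 2) (a₁ a₂ a₃ : ℝ → ℂ)
    (h₁ : SymbolClass m a₁) (h₂ : SymbolClass m a₂) (h₃ : SymbolClass m a₃)
    (b : (Fin 3 → ℝ) → ℂ) (hb : Measurable b) (hbnorm : bNormSq m b < ⊤)
    (α β δ : ℝ) (hα : 0 < α) (hαβ : α < β) (hδ : 0 < δ) (hδ1 : δ < min 1 α) :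
    ∃ C : ℝ, 0 < C ∧
      ∀ ξ : ℝ, 1 < |ξ| → ∀ κ₂ ∈ Set.Icc α β, ∀ κ₃ ∈ Set.Icc α β,
        ‖∫ η in A_GGG δ ξ κ₂ κ₃,
            (aprod a₁ a₂ a₃ (xitheta ξ κ₂ κ₃ - η) - aprod a₁ a₂ a₃ (xitheta ξ κ₂ κ₃)) * b η‖
          ≤ C * |ξ| ^ (3 * m - 1) :=
  stmt8_general m hm a₁ a₂ a₃ h₁ h₂ h₃ b hb hbnorm α β δ hα hδ
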